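/- There exist a finite set Λ of unit vectors in ℝ³ with rational coordinates, a real number ε > 0, for each ξ ∈ Λ two vectors ξ₁, ξ₂ ∈ ℝ³ such that (ξ, ξ₁, ξ₂) is an orthonormal basis of ℝ³, and for each ξ ∈ Λ a smooth strictly positive function γ_ξ defined on the set of symmetric 3×3 real matrices Q with ‖Q − Id‖ < ε, such that every symmetric 3×3 matrix Q with ‖Q − Id‖ < ε admits the decomposition Q = Σ_{ξ∈Λ} (γ_ξ(Q))² (ξ₁⊗ξ₁). -/

import Mathlib

set_option maxHeartbeats 2000000
set_option linter.unreachableTactic false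
set_option linter.unusedTactic false

/-- Euclidean inner product on `ℝ³` (as `Fin 3 → ℝ`). -/
def dot3 (a b : Fin 3 → ℝ) : ℝ := ∑ i, a i * b i

/-- Tensor (outer) product of two vectors of `ℝ³`: `(a⊗b)ᵢⱼ = aᵢbⱼ`. -/
def outer (a b : Fin 3 → ℝ) : Fin 3 → Fin 3 → ℝ := fun i j => a i * b j

/-- Frobenius norm of a `3×3` real matrix. -/
noncomputable def frob (Q : Fin 3 → Fin 3 → ℝ) : ℝ := Real.sqrt (∑ i, ∑ j, (Q i j) ^ 2)

/-- A `3×3` real matrix is symmetric. -/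
def IsSymm3 (Q : Fin 3 → Fin 3 → ℝ) : Prop := ∀ i j, Q j i = Q i j

/-- The `3×3` identity matrix. -/
def idMat3 : Fin 3 → Fin 3 → ℝ := fun i j => if i = j then 1 else 0

/- ### Auxiliary constructions -/

noncomputable def s2 : ℝ := (Real.sqrt 2)⁻¹

lemma s2_sq : s2 * s2 = 1/2 := by
  rw [s2, ← mul_inv, Real.mul_self_sqrt (by norm_num)]; norm_num

/-- The nine rational unit directions `ξ`. -/
noncomputable def f9 : Fin 9 → (Fin 3 → ℝ) :=
  ![![0,1,0], ![0,0,1], ![1,0,0],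
    ![2/3,-(2/3),1/3], ![2/3,2/3,1/3],
    ![2/3,1/3,-(2/3)], ![2/3,1/3,2/3],
    ![1/3,2/3,-(2/3)], ![1/3,2/3,2/3]]

/-- The corresponding unit vectors `ξ₁`, orthogonal to `ξ`. -/
noncomputable def v9 : Fin 9 → (Fin 3 → ℝ) :=
  ![![1,0,0], ![0,1,0], ![0,0,1],
    ![s2,s2,0], ![s2,-s2,0],
    ![s2,0,s2], ![s2,0,-s2],
    ![0,s2,s2], ![0,s2,-s2]]

/-- The (linear) coefficient functions. -/
noncomputable def c9 : Fin 9 → (Fin 3 → Fin 3 → ℝ) → ℝ :=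
  ![fun Q => Q 0 0 - 1/2, fun Q => Q 1 1 - 1/2, fun Q => Q 2 2 - 1/2,
    fun Q => 1/4 + Q 0 1, fun Q => 1/4 - Q 0 1,
    fun Q => 1/4 + Q 0 2, fun Q => 1/4 - Q 0 2,
    fun Q => 1/4 + Q 1 2, fun Q => 1/4 - Q 1 2]

lemma f9_inj : Function.Injective f9 := by
  intro a b h
  fin_cases a <;> fin_cases b <;> first
    | rfl
    | (exfalso
       have h0 := congrFun h 0
       have h1 := congrFun h 1
       have h2 := congrFun h 2
       revert h0 h1 h2
       norm_num [f9, Matrix.cons_val_two, Matrix.tail_cons, Matrix.head_cons])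

noncomputable def xi1 (ξ : Fin 3 → ℝ) : Fin 3 → ℝ :=
  if h : ∃ k, f9 k = ξ then v9 (Classical.choose h) else ![1,0,0]

noncomputable def gam (ξ : Fin 3 → ℝ) (Q : Fin 3 → Fin 3 → ℝ) : ℝ :=
  if h : ∃ k, f9 k = ξ then Real.sqrt (c9 (Classical.choose h) Q) else 1

lemma xi1_f9 (k : Fin 9) : xi1 (f9 k) = v9 k := by
  rw [xi1, dif_pos ⟨k, rfl⟩]
  exact congrArg v9 (f9_inj (Classical.choose_spec (⟨k, rfl⟩ : ∃ k', f9 k' = f9 k)))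

lemma gam_f9 (k : Fin 9) : gam (f9 k) = fun Q => Real.sqrt (c9 k Q) := by
  funext Q
  rw [gam, dif_pos ⟨k, rfl⟩,
    f9_inj (Classical.choose_spec (⟨k, rfl⟩ : ∃ k', f9 k' = f9 k))]

lemma ortho (k : Fin 9) : dot3 (f9 k) (f9 k) = 1 ∧ dot3 (v9 k) (v9 k) = 1 ∧
    dot3 (f9 k) (v9 k) = 0 := by
  have hs := s2_sq
  fin_cases k <;>
    refine ⟨by norm_num [dot3, Fin.sum_univ_three, f9, v9, Matrix.cons_val_two, Matrix.tail_cons, Matrix.head_cons], ?_, ?_⟩ <;>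
    (norm_num [dot3, Fin.sum_univ_three, f9, v9, Matrix.cons_val_two, Matrix.tail_cons, Matrix.head_cons] <;>
      first | linear_combination 2 * hs | ring)

/-- Cross product on `ℝ³`. -/
def cross3 (a b : Fin 3 → ℝ) : Fin 3 → ℝ :=
  ![a 1 * b 2 - a 2 * b 1, a 2 * b 0 - a 0 * b 2, a 0 * b 1 - a 1 * b 0]

lemma dot3_cross_left (a b : Fin 3 → ℝ) : dot3 a (cross3 a b) = 0 := by
  simp [dot3, cross3, Fin.sum_univ_three]; ring

lemma dot3_cross_right (a b : Fin 3 → ℝ) : dot3 b (cross3 a b) = 0 := by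
  simp [dot3, cross3, Fin.sum_univ_three]; ring

lemma dot3_cross_self (a b : Fin 3 → ℝ) (ha : dot3 a a = 1) (hb : dot3 b b = 1)
    (hab : dot3 a b = 0) : dot3 (cross3 a b) (cross3 a b) = 1 := by
  simp only [dot3, cross3, Fin.sum_univ_three] at *
  simp only [Matrix.cons_val_zero, Matrix.cons_val_one, Matrix.head_cons,
    Matrix.cons_val_two, Matrix.tail_cons]
  nlinarith [ha, hb, hab, sq_nonneg (a 0), sq_nonneg (b 0)]

lemma abs_entry_le_frob (M : Fin 3 → Fin 3 → ℝ) (i j : Fin 3) : |M i j| ≤ frob M := by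
  have h1 : (M i j) ^ 2 ≤ ∑ i, ∑ j, (M i j) ^ 2 := by
    have h2 : (M i j) ^ 2 ≤ ∑ j', (M i j') ^ 2 :=
      Finset.single_le_sum (f := fun j' => (M i j') ^ 2) (fun k _ => sq_nonneg _)
        (Finset.mem_univ j)
    refine h2.trans ?_
    exact Finset.single_le_sum (f := fun i' => ∑ j', (M i' j') ^ 2)
      (fun k _ => Finset.sum_nonneg fun _ _ => sq_nonneg _) (Finset.mem_univ i)
  calc |M i j| = Real.sqrt ((M i j) ^ 2) := (Real.sqrt_sq_eq_abs _).symm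
    _ ≤ frob M := Real.sqrt_le_sqrt h1

lemma entry_bounds (Q : Fin 3 → Fin 3 → ℝ) (h : frob (Q - idMat3) < 1/8) (i j : Fin 3) :
    |Q i j - idMat3 i j| < 1/8 := by
  have := (abs_entry_le_frob (Q - idMat3) i j).trans_lt h
  simpa using this

lemma fin3_mk0 (h : 0 < 3) : (⟨0, h⟩ : Fin 3) = 0 := rfl
lemma fin3_mk1 (h : 1 < 3) : (⟨1, h⟩ : Fin 3) = 1 := rfl
lemma fin3_mk2 (h : 2 < 3) : (⟨2, h⟩ : Fin 3) = 2 := rfl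

lemma c9_pos (k : Fin 9) (Q : Fin 3 → Fin 3 → ℝ) (h : frob (Q - idMat3) < 1/8) :
    0 < c9 k Q := by
  have e00 := abs_lt.mp (entry_bounds Q h 0 0)
  have e11 := abs_lt.mp (entry_bounds Q h 1 1)
  have e22 := abs_lt.mp (entry_bounds Q h 2 2)
  have e01 := abs_lt.mp (entry_bounds Q h 0 1)
  have e02 := abs_lt.mp (entry_bounds Q h 0 2)
  have e12 := abs_lt.mp (entry_bounds Q h 1 2)
  norm_num [idMat3, Fin.ext_iff] at e00 e11 e22 e01 e02 e12
  fin_cases k <;> norm_num [c9] <;> first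
    | linarith [e00.1, e00.2] | linarith [e11.1, e11.2] | linarith [e22.1, e22.2]
    | linarith [e01.1, e01.2] | linarith [e02.1, e02.2] | linarith [e12.1, e12.2]

lemma c9_contDiff (k : Fin 9) : ContDiff ℝ (⊤ : ℕ∞) (c9 k) := by
  fin_cases k <;> norm_num [c9] <;> fun_prop

lemma decomp (Q : Fin 3 → Fin 3 → ℝ) (hQ : IsSymm3 Q) :
    Q = ∑ k : Fin 9, (c9 k Q) • outer (v9 k) (v9 k) := by
  have hs := s2_sq
  funext i j
  have expand : (∑ k : Fin 9, (c9 k Q) • outer (v9 k) (v9 k)) i j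
      = ∑ k : Fin 9, (c9 k Q) * (v9 k i * v9 k j) := by
    simp [Finset.sum_apply, outer]
  rw [expand]
  fin_cases i <;> fin_cases j <;>
    · simp only [fin3_mk0, fin3_mk1, fin3_mk2]
      norm_num [c9, v9, Fin.sum_univ_succ, Matrix.cons_val_succ, Matrix.vecHead, Matrix.vecTail, Matrix.cons_val_two, Matrix.tail_cons, Matrix.head_cons]
      first
        | linear_combination -hs
        | linear_combination (-2 * Q 0 1) * hs
        | linear_combination (-2 * Q 0 2) * hs
        | linear_combination (-2 * Q 1 2) * hs
        | linear_combination hQ 0 1 - (2 * Q 0 1) * hs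
        | linear_combination hQ 0 2 - (2 * Q 0 2) * hs
        | linear_combination hQ 1 2 - (2 * Q 1 2) * hs

/-- Second Geometric Lemma: there are finitely many rational unit directions `ξ`, each with an
orthonormal completion `(ξ, ξ₁, ξ₂)`, a radius `ε > 0`, and smooth positive amplitudes `γ_ξ`
on the `ε`-ball of symmetric matrices around the identity, such that every symmetric `Q` with
`‖Q − Id‖ < ε` decomposes as `Q = Σ_ξ γ_ξ(Q)² (ξ₁⊗ξ₁)`. -/
theorem geometric_lemma_symm :
    ∃ (Λ : Finset (Fin 3 → ℝ)) (ε : ℝ) (ξ₁ ξ₂ : (Fin 3 → ℝ) → Fin 3 → ℝ)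
      (γ : (Fin 3 → ℝ) → (Fin 3 → Fin 3 → ℝ) → ℝ),
      0 < ε ∧
      (∀ ξ ∈ Λ, ∀ i, ∃ r : ℚ, ξ i = (r : ℝ)) ∧
      (∀ ξ ∈ Λ,
        dot3 ξ ξ = 1 ∧ dot3 (ξ₁ ξ) (ξ₁ ξ) = 1 ∧ dot3 (ξ₂ ξ) (ξ₂ ξ) = 1 ∧
        dot3 ξ (ξ₁ ξ) = 0 ∧ dot3 ξ (ξ₂ ξ) = 0 ∧ dot3 (ξ₁ ξ) (ξ₂ ξ) = 0) ∧
      (∀ ξ ∈ Λ, ContDiffOn ℝ (⊤ : ℕ∞) (γ ξ) {Q | IsSymm3 Q ∧ frob (Q - idMat3) < ε}) ∧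
      (∀ ξ ∈ Λ, ∀ Q, IsSymm3 Q → frob (Q - idMat3) < ε → 0 < γ ξ Q) ∧
      (∀ Q : Fin 3 → Fin 3 → ℝ, IsSymm3 Q → frob (Q - idMat3) < ε →
        Q = ∑ ξ ∈ Λ, (γ ξ Q) ^ 2 • outer (ξ₁ ξ) (ξ₁ ξ)) := by
  classical
  refine ⟨Finset.image f9 Finset.univ, 1/8, xi1, fun ξ => cross3 ξ (xi1 ξ), gam,
    by norm_num, ?_, ?_, ?_, ?_, ?_⟩
  · -- rational coordinates
    intro ξ hξ i
    simp only [Finset.mem_image, Finset.mem_univ, true_and] at hξ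
    obtain ⟨k, rfl⟩ := hξ
    fin_cases k <;> fin_cases i <;> simp only [fin3_mk0, fin3_mk1, fin3_mk2] <;>
      first
        | (refine ⟨0, ?_⟩; norm_num [f9, Matrix.cons_val_two, Matrix.tail_cons, Matrix.head_cons]; done)
        | (refine ⟨1, ?_⟩; norm_num [f9, Matrix.cons_val_two, Matrix.tail_cons, Matrix.head_cons]; done)
        | (refine ⟨1/3, ?_⟩; norm_num [f9, Matrix.cons_val_two, Matrix.tail_cons, Matrix.head_cons]; done)
        | (refine ⟨2/3, ?_⟩; norm_num [f9, Matrix.cons_val_two, Matrix.tail_cons, Matrix.head_cons]; done)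
        | (refine ⟨-(1/3), ?_⟩; norm_num [f9, Matrix.cons_val_two, Matrix.tail_cons, Matrix.head_cons]; done)
        | (refine ⟨-(2/3), ?_⟩; norm_num [f9, Matrix.cons_val_two, Matrix.tail_cons, Matrix.head_cons]; done)
  · -- orthonormal frames
    intro ξ hξ
    simp only [Finset.mem_image, Finset.mem_univ, true_and] at hξ
    obtain ⟨k, rfl⟩ := hξ
    simp only [xi1_f9]
    obtain ⟨h1, h2, h3⟩ := ortho k
    exact ⟨h1, h2, dot3_cross_self _ _ h1 h2 h3, h3, dot3_cross_left _ _,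
      dot3_cross_right _ _⟩
  · -- smoothness
    intro ξ hξ
    simp only [Finset.mem_image, Finset.mem_univ, true_and] at hξ
    obtain ⟨k, rfl⟩ := hξ
    rw [gam_f9]
    intro Q hQ
    have hpos : c9 k Q ≠ 0 := ne_of_gt (c9_pos k Q hQ.2)
    exact ((Real.contDiffAt_sqrt hpos).comp Q (c9_contDiff k).contDiffAt).contDiffWithinAt
  · -- positivity
    intro ξ hξ Q hQsymm hQ
    simp only [Finset.mem_image, Finset.mem_univ, true_and] at hξ
    obtain ⟨k, rfl⟩ := hξ
    rw [gam_f9]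
    exact Real.sqrt_pos.mpr (c9_pos k Q hQ)
  · -- decomposition
    intro Q hQsymm hQ
    rw [Finset.sum_image (fun a _ b _ h => f9_inj h)]
    have hrw : ∀ k : Fin 9, (gam (f9 k) Q) ^ 2 • outer (xi1 (f9 k)) (xi1 (f9 k))
        = (c9 k Q) • outer (v9 k) (v9 k) := by
      intro k
      rw [xi1_f9, gam_f9]
      congr 1
      exact Real.sq_sqrt (c9_pos k Q hQ).le
    simp only [hrw]
    exact decomp Q hQsymm
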